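/- Let f : ℝⁿ → ℝ be a polynomial function whose infimum f* = inf_{x ∈ ℝⁿ} f(x) is finite. Then f* belongs to K(f) ∩ ℝ, where K(f) = K_0(f) ∪ K_∞(f) is the set of generalized critical values of f: either f* is a critical value of f, or f* is an asymptotic critical value, i.e., there is a sequence x_ℓ with ‖x_ℓ‖ → ∞, ‖x_ℓ‖·‖∇f(x_ℓ)‖ → 0, and f(x_ℓ) → f*. -/

import Mathlib

open MvPolynomial Filter

/-!
For `ε > 0` the function `f_ε(y) = f(y) + ε log (1 + ‖y‖²)` is coercive (as `f ≥ f*`), so it has a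
global minimizer `x_ε`. There `∇f(x_ε) = -2ε x_ε / (1 + ‖x_ε‖²)`, hence
`‖x_ε‖ ‖∇f(x_ε)‖ ≤ 2ε`, and comparing with any `y` gives `f* ≤ f(x_ε) ≤ f(y) + ε log (1 + ‖y‖²)`,
so `f(x_ε) → f*`. If `f*` is attained, the minimizer is a critical point. Otherwise `‖x_ε‖ → ∞`,
since a bounded subsequence would converge to a point where `f = f*`.
-/

/-- Euclidean norm of a point of `ℝⁿ`. -/
noncomputable def eNorm {n : ℕ} (x : Fin n → ℝ) : ℝ :=
  Real.sqrt (∑ i, (x i) ^ 2)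

/-- Gradient of a real polynomial function at a point. -/
noncomputable def polyGrad {n : ℕ} (f : MvPolynomial (Fin n) ℝ)
    (x : Fin n → ℝ) : Fin n → ℝ :=
  fun i => eval x (pderiv i f)

section EuclideanNorm

variable {n : ℕ}

lemma sq_eNorm (x : Fin n → ℝ) : eNorm x ^ 2 = ∑ i, x i ^ 2 :=
  Real.sq_sqrt (Finset.sum_nonneg fun _ _ => sq_nonneg _)

lemma eNorm_nonneg (x : Fin n → ℝ) : 0 ≤ eNorm x := Real.sqrt_nonneg _

lemma norm_le_eNorm (x : Fin n → ℝ) : ‖x‖ ≤ eNorm x := by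
  refine (pi_norm_le_iff_of_nonneg (eNorm_nonneg x)).2 fun i => ?_
  rw [Real.norm_eq_abs, ← Real.sqrt_sq_eq_abs]
  exact Real.sqrt_le_sqrt
    (Finset.single_le_sum (fun j _ => sq_nonneg (x j)) (Finset.mem_univ i))

lemma eNorm_smul (c : ℝ) (x : Fin n → ℝ) : eNorm (c • x) = |c| * eNorm x := by
  simp only [eNorm, Pi.smul_apply, smul_eq_mul, mul_pow, ← Finset.mul_sum]
  rw [Real.sqrt_mul (sq_nonneg c), Real.sqrt_sq_eq_abs]

lemma continuous_eNorm : Continuous (eNorm : (Fin n → ℝ) → ℝ) := by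
  unfold eNorm; fun_prop

lemma sum_sq_update (x : Fin n → ℝ) (i : Fin n) (s : ℝ) :
    ∑ j, Function.update x i s j ^ 2 = ∑ j, x j ^ 2 - x i ^ 2 + s ^ 2 := by
  have hi := Finset.mem_univ i
  rw [← Finset.add_sum_erase _ _ hi, ← Finset.add_sum_erase _ _ hi, Function.update_self,
    Finset.sum_congr rfl fun j hj => by rw [Function.update_of_ne (Finset.ne_of_mem_erase hj)]]
  ring

end EuclideanNorm

lemma hasDerivAt_eval_update {σ : Type*} [DecidableEq σ] (f : MvPolynomial σ ℝ)
    (x : σ → ℝ) (i : σ) (t : ℝ) :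
    HasDerivAt (fun s => eval (Function.update x i s) f)
      (eval (Function.update x i t) (pderiv i f)) t := by
  induction f using MvPolynomial.induction_on with
  | C a => simpa only [eval_C, pderiv_C, map_zero] using hasDerivAt_const t a
  | add p q hp hq => simpa only [map_add] using hp.fun_add hq
  | mul_X p j hp =>
      rcases eq_or_ne j i with rfl | hne
      · simpa only [map_mul, eval_X, pderiv_mul, pderiv_X_self, map_add, mul_one,
          Function.update_self] using hp.fun_mul (hasDerivAt_id' t)
      · simpa only [map_mul, eval_X, pderiv_mul, pderiv_X_of_ne hne, map_add, map_zero, mul_zero,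
          add_zero, Function.update_of_ne hne] using hp.mul_const (x j)

lemma hasDerivAt_eval_update_self {σ : Type*} [DecidableEq σ] (f : MvPolynomial σ ℝ)
    (x : σ → ℝ) (i : σ) :
    HasDerivAt (fun s => eval (Function.update x i s) f) (eval x (pderiv i f)) (x i) := by
  simpa only [Function.update_eq_self] using hasDerivAt_eval_update f x i (x i)

lemma IsMinOn.hasDerivAt_update_eq_zero {σ : Type*} [DecidableEq σ] {G : (σ → ℝ) → ℝ}
    {x : σ → ℝ} {i : σ} {d : ℝ} (hx : IsMinOn G Set.univ x)
    (hG : HasDerivAt (fun s => G (Function.update x i s)) d (x i)) : d = 0 := by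
  refine IsLocalMin.hasDerivAt_eq_zero (Eventually.of_forall fun s => ?_) hG
  simpa only [Function.update_eq_self] using isMinOn_univ_iff.1 hx (Function.update x i s)

section Penalty

variable {n : ℕ}

lemma hasDerivAt_log_one_add_sq_eNorm_update (x : Fin n → ℝ) (i : Fin n) :
    HasDerivAt (fun s => Real.log (1 + eNorm (Function.update x i s) ^ 2))
      (2 * x i / (1 + eNorm x ^ 2)) (x i) := by
  have hsq : ∀ s,
      1 + eNorm (Function.update x i s) ^ 2 = (1 + eNorm x ^ 2 - x i ^ 2) + s ^ 2 := by
    intro s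
    rw [sq_eNorm, sq_eNorm, sum_sq_update]
    ring
  have hpos : (1 + eNorm x ^ 2 - x i ^ 2) + x i ^ 2 ≠ 0 := by
    rw [sub_add_cancel]
    positivity
  simp only [hsq]
  convert ((hasDerivAt_pow 2 (x i)).const_add _).log hpos using 1
  ring

noncomputable def logPenalized (f : MvPolynomial (Fin n) ℝ) (ε : ℝ) (y : Fin n → ℝ) :
    ℝ :=
  eval y f + ε * Real.log (1 + eNorm y ^ 2)

variable {f : MvPolynomial (Fin n) ℝ} {ε : ℝ} {x : Fin n → ℝ}

lemma continuous_logPenalized : Continuous (logPenalized f ε) := by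
  refine f.continuous_eval.add (continuous_const.mul ?_)
  exact (continuous_const.add (continuous_eNorm.pow 2)).log fun y =>
    (by positivity : (0 : ℝ) < 1 + eNorm y ^ 2).ne'

lemma tendsto_logPenalized_cocompact (hf : BddBelow (Set.range fun y => eval y f))
    (hε : 0 < ε) : Tendsto (logPenalized f ε) (cocompact _) atTop := by
  obtain ⟨m, hm⟩ := hf
  have hlog : Tendsto (fun r : ℝ => m + ε * Real.log (1 + r ^ 2)) atTop atTop :=
    tendsto_atTop_add_const_left _ m <| (Real.tendsto_log_atTop.comp <|
      tendsto_atTop_add_const_left _ 1 (tendsto_pow_atTop two_ne_zero)).const_mul_atTop hε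
  refine tendsto_atTop_mono (fun y => ?_) (hlog.comp tendsto_norm_cocompact_atTop)
  have hy : ‖y‖ ^ 2 ≤ eNorm y ^ 2 := pow_le_pow_left₀ (norm_nonneg y) (norm_le_eNorm y) 2
  exact add_le_add (hm ⟨y, rfl⟩) (mul_le_mul_of_nonneg_left
    (Real.log_le_log (by positivity) (by linarith)) hε.le)

lemma exists_isMinOn_logPenalized (hf : BddBelow (Set.range fun y => eval y f)) (hε : 0 < ε) :
    ∃ x, IsMinOn (logPenalized f ε) Set.univ x :=
  let ⟨x, hx⟩ :=
    continuous_logPenalized.exists_forall_le (tendsto_logPenalized_cocompact hf hε)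
  ⟨x, isMinOn_univ_iff.2 hx⟩

lemma polyGrad_eq_smul_of_isMinOn (hx : IsMinOn (logPenalized f ε) Set.univ x) :
    polyGrad f x = -(2 * ε / (1 + eNorm x ^ 2)) • x := by
  funext i
  have hcrit := hx.hasDerivAt_update_eq_zero ((hasDerivAt_eval_update_self f x i).add
    ((hasDerivAt_log_one_add_sq_eNorm_update x i).const_mul ε))
  simp only [polyGrad, Pi.smul_apply, smul_eq_mul]
  linear_combination hcrit

lemma eNorm_mul_eNorm_polyGrad_le (hε : 0 ≤ ε) (hx : IsMinOn (logPenalized f ε) Set.univ x) :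
    eNorm x * eNorm (polyGrad f x) ≤ 2 * ε := by
  have hpos : 0 < 1 + eNorm x ^ 2 := by positivity
  rw [polyGrad_eq_smul_of_isMinOn hx, eNorm_smul, abs_neg, abs_of_nonneg (by positivity)]
  calc eNorm x * (2 * ε / (1 + eNorm x ^ 2) * eNorm x)
      = 2 * ε * (eNorm x ^ 2 / (1 + eNorm x ^ 2)) := by ring
    _ ≤ 2 * ε * 1 := by gcongr; exact (div_le_one hpos).2 (by linarith)
    _ = 2 * ε := mul_one _

end Penalty

lemma tendsto_of_isGLB_of_le_add_mul {α : Type*} {F P : α → ℝ} {m : ℝ}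
    (hm : IsGLB (Set.range F) m) {u ε : ℕ → ℝ} (hε : Tendsto ε atTop (nhds 0))
    (hlow : ∀ ℓ, m ≤ u ℓ) (hup : ∀ ℓ y, u ℓ ≤ F y + ε ℓ * P y) :
    Tendsto u atTop (nhds m) := by
  refine tendsto_order.2
    ⟨fun a ha => .of_forall fun ℓ => ha.trans_le (hlow ℓ), fun b hb => ?_⟩
  obtain ⟨_, ⟨y, rfl⟩, -, hyb⟩ := hm.exists_between hb
  have hlim : Tendsto (fun ℓ => F y + ε ℓ * P y) atTop (nhds (F y)) := by
    simpa using (hε.mul_const (P y)).const_add (F y)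
  exact (hlim.eventually_lt_const hyb).mono fun ℓ hℓ => (hup ℓ y).trans_lt hℓ

lemma tendsto_norm_atTop_of_tendsto_comp {E : Type*} [NormedAddCommGroup E] [ProperSpace E]
    {F : E → ℝ} (hF : Continuous F) {u : ℕ → E} {m : ℝ} (hu : Tendsto (F ∘ u) atTop (nhds m))
    (hm : ∀ x, F x ≠ m) : Tendsto (fun ℓ => ‖u ℓ‖) atTop atTop := by
  refine tendsto_atTop.2 fun b => ?_
  by_contra hfar
  have hnear : ∃ᶠ ℓ in atTop, u ℓ ∈ Metric.closedBall 0 b :=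
    (not_eventually.1 hfar).mono fun ℓ hℓ =>
      mem_closedBall_zero_iff.2 (not_le.1 hℓ).le
  obtain ⟨a, -, φ, hφ, hlim⟩ := (isCompact_closedBall 0 b).tendsto_subseq' hnear
  exact hm a <| tendsto_nhds_unique ((hF.tendsto a).comp hlim) (hu.comp hφ.tendsto_atTop)

/-- If `f : ℝⁿ → ℝ` is a polynomial function whose infimum
`f* = inf_{x ∈ ℝⁿ} f(x)` is finite, then `f*` is a generalized critical value:
either `f*` is a critical value of `f`, or `f*` is an asymptotic critical
value, i.e., there is a sequence `x_ℓ` with `‖x_ℓ‖ → ∞`,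
`‖x_ℓ‖·‖∇f(x_ℓ)‖ → 0` and `f(x_ℓ) → f*`. -/
theorem infimum_in_generalized_critical_values (n : ℕ)
    (f : MvPolynomial (Fin n) ℝ) (fstar : ℝ)
    (hinf : IsGLB (Set.range fun x : Fin n → ℝ => eval x f) fstar) :
    (∃ x : Fin n → ℝ, (∀ i, eval x (pderiv i f) = 0) ∧ eval x f = fstar) ∨
    (∃ x : ℕ → (Fin n → ℝ),
      Tendsto (fun ℓ => eNorm (x ℓ)) atTop atTop ∧
      Tendsto (fun ℓ => eNorm (x ℓ) * eNorm (polyGrad f (x ℓ))) atTop (nhds 0) ∧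
      Tendsto (fun ℓ => eval (x ℓ) f) atTop (nhds fstar)) := by
  by_cases hattained : ∃ x, eval x f = fstar
  · obtain ⟨x, hx⟩ := hattained
    have hmin : IsMinOn (fun y => eval y f) Set.univ x :=
      isMinOn_univ_iff.2 fun y => hx ▸ hinf.1 ⟨y, rfl⟩
    exact .inl
      ⟨x, fun i => hmin.hasDerivAt_update_eq_zero (hasDerivAt_eval_update_self f x i), hx⟩
  push Not at hattained
  set ε : ℕ → ℝ := fun ℓ => 1 / (ℓ + 1)
  have hε : ∀ ℓ, 0 < ε ℓ := fun ℓ => by positivity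
  have hε0 : Tendsto ε atTop (nhds 0) := tendsto_one_div_add_atTop_nhds_zero_nat
  choose x hx using fun ℓ => exists_isMinOn_logPenalized ⟨fstar, hinf.1⟩ (hε ℓ)
  have hval : Tendsto (fun ℓ => eval (x ℓ) f) atTop (nhds fstar) := by
    refine tendsto_of_isGLB_of_le_add_mul (P := fun y => Real.log (1 + eNorm y ^ 2)) hinf hε0
      (fun ℓ => hinf.1 ⟨x ℓ, rfl⟩) fun ℓ y => ?_
    refine le_trans ?_ (isMinOn_univ_iff.1 (hx ℓ) y)
    exact le_add_of_nonneg_right <|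
      mul_nonneg (hε ℓ).le (Real.log_nonneg (by linarith [sq_nonneg (eNorm (x ℓ))]))
  have hnorm : Tendsto (fun ℓ => eNorm (x ℓ)) atTop atTop :=
    tendsto_atTop_mono (fun ℓ => norm_le_eNorm (x ℓ))
      (tendsto_norm_atTop_of_tendsto_comp f.continuous_eval hval hattained)
  refine .inr ⟨x, hnorm, ?_, hval⟩
  refine squeeze_zero (fun ℓ => mul_nonneg (eNorm_nonneg _) (eNorm_nonneg _))
    (fun ℓ => eNorm_mul_eNorm_polyGrad_le (hε ℓ).le (hx ℓ)) ?_
  simpa using hε0.const_mul 2
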